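/- Let σ₁ > 0, σ₂ > 0, r ∈ ℝ, c ∈ ℝ, S₁ > 0, S₂ > 0 and ρ ∈ (−1, 1). For x > 0, y > 0, τ > 0 define d_x(x, τ) = (ln(x/S₁) + (r − σ₁²/2)τ)/(σ₁√τ), d_y(y, τ) = (ln(y/S₂) + (r − σ₂²/2)τ)/(σ₂√τ), and u(x, y, τ) = c·e^{−rτ}·B(d_x(x, τ), d_y(y, τ); ρ), where B is the bivariate cumulative normal distribution function with correlation ρ. Then u satisfies the transformed two-asset Black-Scholes equation: for all x > 0, y > 0, τ > 0, ∂u/∂τ − (1/2)σ₁²x² ∂²u/∂x² − (1/2)σ₂²y² ∂²u/∂y² − ρσ₁σ₂xy ∂²u/∂x∂y − rx ∂u/∂x − ry ∂u/∂y + ru = 0. -/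

import Mathlib

/-!
Write `φ t = exp (-t²/2)`, `N` for its integral over `(-∞, d)` and `s = √(1 - ρ²)`. Completing
the square factors the kernel of `B` as `φ ξ * φ ((η - ρ ξ) / s)`, so the inner integral is
`s φ ξ N ((b - ρ ξ) / s)` and the fundamental theorem of calculus gives `∂ₐB`; Fubini makes `B`
symmetric, which gives `∂_b B`. Both partials are continuous, so `B` is differentiable, and
differentiating once more yields `B_aa + a B_a + ρ B_ab = 0 = B_bb + b B_b + ρ B_ab`. Substituting
`d_x, d_y`, whose derivatives are `x ∂ₓ d_x = 1 / (σ₁ √τ)` and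
`∂_τ d_x = (r - σ₁²/2) / (σ₁ √τ) - d_x / (2τ)`, the drift terms cancel and what is left of the
equation is `-(c e^{-rτ} / 2τ)` times the sum of these two identities.
-/

open MeasureTheory Set Real Filter Topology

noncomputable section

section PartialDerivatives

variable {𝕜 F : Type*} [NontriviallyNormedField 𝕜] [NormedAddCommGroup F] [NormedSpace 𝕜 F]
  {f : 𝕜 → 𝕜 → F} {f₁ f₂ : F} {a b : 𝕜}

lemma HasFDerivAt.hasDerivAt_uncurry_fst
    (h : HasFDerivAt (Function.uncurry f)
      ((ContinuousLinearMap.toSpanSingleton 𝕜 f₁).coprod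
        (ContinuousLinearMap.toSpanSingleton 𝕜 f₂)) (a, b)) :
    HasDerivAt (f · b) f₁ a := by
  simpa [Function.comp_def] using
    h.comp_hasDerivAt a ((hasDerivAt_id a).prodMk (hasDerivAt_const a b))

lemma HasFDerivAt.hasDerivAt_uncurry_snd
    (h : HasFDerivAt (Function.uncurry f)
      ((ContinuousLinearMap.toSpanSingleton 𝕜 f₁).coprod
        (ContinuousLinearMap.toSpanSingleton 𝕜 f₂)) (a, b)) :
    HasDerivAt (f a ·) f₂ b := by
  simpa [Function.comp_def] using
    h.comp_hasDerivAt b ((hasDerivAt_const b a).prodMk (hasDerivAt_id b))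

lemma HasFDerivAt.hasDerivAt_uncurry_comp {A B : 𝕜 → 𝕜} {A' B' t : 𝕜}
    (h : HasFDerivAt (Function.uncurry f)
      ((ContinuousLinearMap.toSpanSingleton 𝕜 f₁).coprod
        (ContinuousLinearMap.toSpanSingleton 𝕜 f₂)) (A t, B t))
    (hA : HasDerivAt A A' t) (hB : HasDerivAt B B' t) :
    HasDerivAt (fun t => f (A t) (B t)) (A' • f₁ + B' • f₂) t := by
  simpa [Function.comp_def] using h.comp_hasDerivAt t (hA.prodMk hB)

end PartialDerivatives

lemma hasDerivAt_integral_Iio {E : Type*} [NormedAddCommGroup E] [NormedSpace ℝ E]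
    [CompleteSpace E] {g : ℝ → E} (hg : Continuous g) (hgi : Integrable g) (a : ℝ) :
    HasDerivAt (fun a => ∫ t in Iio a, g t) (g a) a := by
  have hsplit : ∀ b, ∫ t in Iio b, g t = (∫ t in Iic 0, g t) + ∫ t in (0 : ℝ)..b, g t := by
    intro b
    rw [setIntegral_congr_set Iio_ae_eq_Iic, ← intervalIntegral.integral_Iic_sub_Iic
      hgi.integrableOn hgi.integrableOn]
    abel
  simp_rw [hsplit]
  exact (intervalIntegral.integral_hasDerivAt_right hgi.intervalIntegrable
    hg.aestronglyMeasurable.stronglyMeasurableAtFilter hg.continuousAt).const_add _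

lemma setIntegral_Iio_comp_sub_div {E : Type*} [NormedAddCommGroup E] [NormedSpace ℝ E]
    (g : ℝ → E) {σ : ℝ} (hσ : 0 < σ) (μ b : ℝ) :
    ∫ z in Iio b, g ((z - μ) / σ) = σ • ∫ t in Iio ((b - μ) / σ), g t := by
  have hmem : ∀ z, z ∈ Iio b ↔ (z - μ) / σ ∈ Iio ((b - μ) / σ) := fun z => by
    rw [mem_Iio, mem_Iio, div_lt_div_iff_of_pos_right hσ, sub_lt_sub_iff_right]
  rw [← integral_indicator measurableSet_Iio, ← integral_indicator measurableSet_Iio]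
  calc ∫ z, (Iio b).indicator (fun z => g ((z - μ) / σ)) z
      = ∫ z, (Iio ((b - μ) / σ)).indicator g ((z - μ) / σ) := by
        congr 1; ext z
        by_cases hz : z ∈ Iio b
        · rw [indicator_of_mem hz, indicator_of_mem ((hmem z).1 hz)]
        · rw [indicator_of_notMem hz, indicator_of_notMem (mt (hmem z).2 hz)]
    _ = ∫ z, (Iio ((b - μ) / σ)).indicator g (z / σ) :=
        integral_sub_right_eq_self (fun z => (Iio ((b - μ) / σ)).indicator g (z / σ)) μ
    _ = σ • ∫ t, (Iio ((b - μ) / σ)).indicator g t := by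
        rw [Measure.integral_comp_div, abs_of_pos hσ]

def gauss (t : ℝ) : ℝ := exp (-t ^ 2 / 2)

/-- Unnormalised: `gaussCDF d = √(2π) Φ(d)`. -/
def gaussCDF (d : ℝ) : ℝ := ∫ t in Iio d, gauss t

@[fun_prop]
lemma continuous_gauss : Continuous gauss := by
  unfold gauss; fun_prop

lemma integrable_gauss : Integrable gauss := by
  refine (integrable_exp_neg_mul_sq (b := 1 / 2) (by norm_num)).congr (ae_of_all _ fun t => ?_)
  simp only [gauss]; ring_nf

lemma hasDerivAt_gauss (t : ℝ) : HasDerivAt gauss (-t * gauss t) t := by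
  have : HasDerivAt (fun t => -t ^ 2 / 2) (-t) t :=
    ((hasDerivAt_pow 2 t).neg.div_const 2).congr_deriv (by push_cast; ring)
  exact this.exp.congr_deriv (by rw [gauss]; ring)

lemma hasDerivAt_gaussCDF (d : ℝ) : HasDerivAt gaussCDF (gauss d) d :=
  hasDerivAt_integral_Iio continuous_gauss integrable_gauss d

@[fun_prop]
lemma continuous_gaussCDF : Continuous gaussCDF :=
  continuous_iff_continuousAt.2 fun d => (hasDerivAt_gaussCDF d).continuousAt

def bivarNormalKernel (ρ ξ η : ℝ) : ℝ :=
  exp (-(ξ ^ 2 - 2 * ρ * ξ * η + η ^ 2) / (2 * (1 - ρ ^ 2)))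

def bivarNormalCDF (ρ a b : ℝ) : ℝ :=
  (1 / (2 * π * √(1 - ρ ^ 2))) * ∫ ξ in Iio a, ∫ η in Iio b, bivarNormalKernel ρ ξ η

def bivarNormalPDF (ρ a b : ℝ) : ℝ := bivarNormalKernel ρ a b / (2 * π * √(1 - ρ ^ 2))

/-- `∂B/∂a` at `(a, b)`; by symmetry `∂B/∂b` at `(a, b)` is `bivarNormalPartial ρ b a`. -/
def bivarNormalPartial (ρ a b : ℝ) : ℝ :=
  gauss a * gaussCDF ((b - ρ * a) / √(1 - ρ ^ 2)) / (2 * π)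

lemma bivarNormalKernel_comm (ρ ξ η : ℝ) :
    bivarNormalKernel ρ ξ η = bivarNormalKernel ρ η ξ := by
  unfold bivarNormalKernel; ring_nf

lemma bivarNormalPDF_comm (ρ a b : ℝ) : bivarNormalPDF ρ a b = bivarNormalPDF ρ b a := by
  rw [bivarNormalPDF, bivarNormalPDF, bivarNormalKernel_comm]

@[fun_prop]
lemma continuous_bivarNormalKernel (ρ : ℝ) :
    Continuous (Function.uncurry (bivarNormalKernel ρ)) := by
  unfold bivarNormalKernel; fun_prop

lemma one_sub_sq_pos_of_abs_lt_one {ρ : ℝ} (hρ : |ρ| < 1) : 0 < 1 - ρ ^ 2 :=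
  sub_pos.2 ((sq_lt_one_iff_abs_lt_one ρ).2 hρ)

section BivariateNormal

variable {ρ : ℝ} (hρ : |ρ| < 1)
include hρ

lemma bivarNormalKernel_eq_gauss_mul (ξ η : ℝ) :
    bivarNormalKernel ρ ξ η = gauss ξ * gauss ((η - ρ * ξ) / √(1 - ρ ^ 2)) := by
  have hD : 0 < 1 - ρ ^ 2 := one_sub_sq_pos_of_abs_lt_one hρ
  rw [bivarNormalKernel, gauss, gauss, ← exp_add, div_pow, sq_sqrt hD.le]
  congr 1
  field_simp
  ring

lemma integrable_bivarNormalKernel :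
    Integrable (Function.uncurry (bivarNormalKernel ρ)) (volume.prod volume) := by
  have hD : 0 < 1 - ρ ^ 2 := one_sub_sq_pos_of_abs_lt_one hρ
  set k := (1 - |ρ|) / (2 * (1 - ρ ^ 2))
  have hk : 0 < k := div_pos (by linarith) (by linarith)
  refine ((integrable_exp_neg_mul_sq hk).mul_prod (integrable_exp_neg_mul_sq hk)).mono'
    (continuous_bivarNormalKernel ρ).aestronglyMeasurable (ae_of_all _ fun ⟨ξ, η⟩ => ?_)
  have hquad : (1 - |ρ|) * (ξ ^ 2 + η ^ 2) ≤ ξ ^ 2 - 2 * ρ * ξ * η + η ^ 2 := by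
    rcases abs_cases ρ with ⟨h, h0⟩ | ⟨h, h0⟩ <;> rw [h]
    · nlinarith [mul_nonneg h0 (sq_nonneg (ξ - η))]
    · nlinarith [mul_nonneg (neg_nonneg.2 h0.le) (sq_nonneg (ξ + η))]
  simp only [Function.uncurry_apply_pair, bivarNormalKernel]
  rw [Real.norm_of_nonneg (exp_pos _).le, ← exp_add]
  refine exp_le_exp.2 ?_
  rw [show -k * ξ ^ 2 + -k * η ^ 2 = -((1 - |ρ|) * (ξ ^ 2 + η ^ 2)) / (2 * (1 - ρ ^ 2)) by ring]
  exact div_le_div_of_nonneg_right (by linarith) (by linarith)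

lemma bivarNormalCDF_comm (a b : ℝ) : bivarNormalCDF ρ a b = bivarNormalCDF ρ b a := by
  have hint : Integrable (Function.uncurry (bivarNormalKernel ρ))
      ((volume.restrict (Iio a)).prod (volume.restrict (Iio b))) := by
    rw [Measure.prod_restrict]
    exact (integrable_bivarNormalKernel hρ).restrict
  simp only [bivarNormalCDF, integral_integral_swap hint, bivarNormalKernel_comm ρ _ _]

lemma integral_Iio_bivarNormalKernel (ξ b : ℝ) :
    ∫ η in Iio b, bivarNormalKernel ρ ξ η =
      √(1 - ρ ^ 2) * (gauss ξ * gaussCDF ((b - ρ * ξ) / √(1 - ρ ^ 2))) := by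
  have hs : 0 < √(1 - ρ ^ 2) := sqrt_pos.2 (one_sub_sq_pos_of_abs_lt_one hρ)
  simp_rw [bivarNormalKernel_eq_gauss_mul hρ ξ]
  rw [integral_const_mul, setIntegral_Iio_comp_sub_div gauss hs, smul_eq_mul, gaussCDF]
  ring

lemma hasDerivAt_bivarNormalCDF_fst (a b : ℝ) :
    HasDerivAt (bivarNormalCDF ρ · b) (bivarNormalPartial ρ a b) a := by
  have hs : 0 < √(1 - ρ ^ 2) := sqrt_pos.2 (one_sub_sq_pos_of_abs_lt_one hρ)
  have hinner := integral_Iio_bivarNormalKernel hρ (b := b)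
  have hint : Integrable fun ξ => ∫ η in Iio b, bivarNormalKernel ρ ξ η := by
    have := (integrable_bivarNormalKernel hρ).restrict (s := univ ×ˢ Iio b)
    rw [← Measure.prod_restrict, Measure.restrict_univ] at this
    exact this.integral_prod_left
  have hcont : Continuous fun ξ => ∫ η in Iio b, bivarNormalKernel ρ ξ η := by
    simp_rw [hinner]; fun_prop
  refine ((hasDerivAt_integral_Iio hcont hint a).const_mul _).congr_deriv ?_
  rw [hinner, bivarNormalPartial]
  field_simp

lemma hasDerivAt_bivarNormalCDF_snd (a b : ℝ) :
    HasDerivAt (bivarNormalCDF ρ a ·) (bivarNormalPartial ρ b a) b := by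
  simp_rw [bivarNormalCDF_comm hρ a]
  exact hasDerivAt_bivarNormalCDF_fst hρ b a

lemma hasFDerivAt_bivarNormalCDF (a b : ℝ) :
    HasFDerivAt (Function.uncurry (bivarNormalCDF ρ))
      ((ContinuousLinearMap.toSpanSingleton ℝ (bivarNormalPartial ρ a b)).coprod
        (ContinuousLinearMap.toSpanSingleton ℝ (bivarNormalPartial ρ b a))) (a, b) := by
  have hcont : Continuous (Function.uncurry (bivarNormalPartial ρ)) := by
    unfold bivarNormalPartial; fun_prop
  have hspan : Continuous fun c : ℝ => ContinuousLinearMap.toSpanSingleton ℝ c :=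
    (ContinuousLinearMap.toSpanSingletonCLE (𝕜 := ℝ) (E := ℝ)).continuous
  have h₁ : ∀ p : ℝ × ℝ, HasFDerivAt (bivarNormalCDF ρ · p.2)
      (ContinuousLinearMap.toSpanSingleton ℝ (bivarNormalPartial ρ p.1 p.2)) p.1 :=
    fun p => (hasDerivAt_bivarNormalCDF_fst hρ p.1 p.2).hasFDerivAt
  have h₂ : ∀ p : ℝ × ℝ, HasFDerivAt (bivarNormalCDF ρ p.1 ·)
      (ContinuousLinearMap.toSpanSingleton ℝ (bivarNormalPartial ρ p.2 p.1)) p.2 :=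
    fun p => (hasDerivAt_bivarNormalCDF_snd hρ p.1 p.2).hasFDerivAt
  exact (hasStrictFDerivAt_uncurry_coprod (u := (a, b)) (f := bivarNormalCDF ρ)
    (f₁ := fun a b => ContinuousLinearMap.toSpanSingleton ℝ (bivarNormalPartial ρ a b))
    (f₂ := fun a b => ContinuousLinearMap.toSpanSingleton ℝ (bivarNormalPartial ρ b a))
    (Eventually.of_forall h₁) (Eventually.of_forall h₂)
    (hspan.comp hcont).continuousAt
    (hspan.comp (hcont.comp continuous_swap)).continuousAt).hasFDerivAt

lemma hasDerivAt_bivarNormalPartial_fst (a b : ℝ) :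
    HasDerivAt (bivarNormalPartial ρ · b)
      (-a * bivarNormalPartial ρ a b - ρ * bivarNormalPDF ρ a b) a := by
  have hinner : HasDerivAt (fun a => (b - ρ * a) / √(1 - ρ ^ 2)) (-ρ / √(1 - ρ ^ 2)) a := by
    simpa using ((hasDerivAt_id a).const_mul ρ).const_sub b |>.div_const (√(1 - ρ ^ 2))
  refine (((hasDerivAt_gauss a).mul ((hasDerivAt_gaussCDF _).comp a hinner)).div_const
    (2 * π)).congr_deriv ?_
  rw [bivarNormalPartial, bivarNormalPDF, bivarNormalKernel_eq_gauss_mul hρ, Function.comp_apply]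
  field_simp
  ring

lemma hasDerivAt_bivarNormalPartial_snd (a b : ℝ) :
    HasDerivAt (bivarNormalPartial ρ a ·) (bivarNormalPDF ρ a b) b := by
  have hinner : HasDerivAt (fun b => (b - ρ * a) / √(1 - ρ ^ 2)) (1 / √(1 - ρ ^ 2)) b := by
    simpa using ((hasDerivAt_id b).sub_const (ρ * a)).div_const (√(1 - ρ ^ 2))
  refine ((((hasDerivAt_gaussCDF _).comp b hinner).const_mul (gauss a)).div_const
    (2 * π)).congr_deriv ?_
  rw [bivarNormalPDF, bivarNormalKernel_eq_gauss_mul hρ]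
  field_simp

end BivariateNormal

def blackScholesD (S σ r x τ : ℝ) : ℝ := (log (x / S) + (r - σ ^ 2 / 2) * τ) / (σ * √τ)

section BlackScholesD

variable {S σ r : ℝ}

lemma hasDerivAt_blackScholesD_spot (hS : S ≠ 0) (τ : ℝ) {x : ℝ} (hx : x ≠ 0) :
    HasDerivAt (blackScholesD S σ r · τ) (x⁻¹ / (σ * √τ)) x := by
  have hlog : HasDerivAt (fun x => log (x / S)) x⁻¹ x := by
    have := ((hasDerivAt_id x).div_const S).log (div_ne_zero hx hS)
    simp only [id] at this
    exact this.congr_deriv (by field_simp)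
  exact (hlog.add_const _).div_const _

lemma hasDerivAt_blackScholesD_time (hσ : σ ≠ 0) (x : ℝ) {τ : ℝ} (hτ : 0 < τ) :
    HasDerivAt (blackScholesD S σ r x ·)
      ((r - σ ^ 2 / 2) / (σ * √τ) - blackScholesD S σ r x τ / (2 * τ)) τ := by
  have hs : 0 < √τ := sqrt_pos.2 hτ
  have hnum : HasDerivAt (fun t => log (x / S) + (r - σ ^ 2 / 2) * t) (r - σ ^ 2 / 2) τ := by
    simpa using ((hasDerivAt_id τ).const_mul (r - σ ^ 2 / 2)).const_add (log (x / S))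
  have hden : HasDerivAt (fun t => σ * √t) (σ * (1 / (2 * √τ))) τ :=
    (hasDerivAt_sqrt hτ.ne').const_mul σ
  refine (hnum.div hden (by positivity)).congr_deriv ?_
  rw [blackScholesD]
  generalize hq : √τ = q at hs ⊢
  obtain rfl : τ = q ^ 2 := by rw [← hq, sq_sqrt hτ.le]
  field_simp

lemma deriv_deriv_comp_blackScholesD_spot (hS : S ≠ 0) (τ : ℝ) {F F' F'' : ℝ → ℝ}
    (hF : ∀ d, HasDerivAt F (F' d) d) (hF' : ∀ d, HasDerivAt F' (F'' d) d) {x : ℝ}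
    (hx : 0 < x) :
    deriv (fun a => deriv (fun b => F (blackScholesD S σ r b τ)) a) x =
      F'' (blackScholesD S σ r x τ) * (x⁻¹ / (σ * √τ)) * (x⁻¹ / (σ * √τ)) +
        F' (blackScholesD S σ r x τ) * (-(x ^ 2)⁻¹ / (σ * √τ)) := by
  have hfirst : (fun a => deriv (fun b => F (blackScholesD S σ r b τ)) a) =ᶠ[𝓝 x]
      fun a => F' (blackScholesD S σ r a τ) * (a⁻¹ / (σ * √τ)) := by
    filter_upwards [Ioi_mem_nhds hx] with a ha
    exact ((hF _).comp a (hasDerivAt_blackScholesD_spot hS τ ha.ne')).deriv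
  rw [hfirst.deriv_eq]
  exact (((hF' _).comp x (hasDerivAt_blackScholesD_spot hS τ hx.ne')).mul
    ((hasDerivAt_inv hx.ne').div_const _)).deriv

lemma deriv_deriv_comp_blackScholesD_mixed {S₁ S₂ σ₁ σ₂ : ℝ} (hS₁ : S₁ ≠ 0) (hS₂ : S₂ ≠ 0)
    (τ : ℝ) {G Gy Gxy : ℝ → ℝ → ℝ} (hG : ∀ a b, HasDerivAt (G a ·) (Gy a b) b)
    (hGy : ∀ a b, HasDerivAt (Gy · b) (Gxy a b) a) {x y : ℝ} (hx : x ≠ 0) (hy : y ≠ 0) :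
    deriv (fun a => deriv (fun b =>
      G (blackScholesD S₁ σ₁ r a τ) (blackScholesD S₂ σ₂ r b τ)) y) x =
      Gxy (blackScholesD S₁ σ₁ r x τ) (blackScholesD S₂ σ₂ r y τ) *
        (x⁻¹ / (σ₁ * √τ)) * (y⁻¹ / (σ₂ * √τ)) := by
  have hfirst : (fun a => deriv (fun b =>
      G (blackScholesD S₁ σ₁ r a τ) (blackScholesD S₂ σ₂ r b τ)) y) =
      fun a => Gy (blackScholesD S₁ σ₁ r a τ) (blackScholesD S₂ σ₂ r y τ) *
        (y⁻¹ / (σ₂ * √τ)) := by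
    funext a
    exact ((hG _ _).comp y (hasDerivAt_blackScholesD_spot hS₂ τ hy)).deriv
  rw [hfirst]
  exact (((hGy _ _).comp x (hasDerivAt_blackScholesD_spot hS₁ τ hx)).mul_const _).deriv

end BlackScholesD

def SolvesTransformedBlackScholes (σ₁ σ₂ ρ r : ℝ) (u : ℝ → ℝ → ℝ → ℝ) : Prop :=
  ∀ x y τ : ℝ, 0 < x → 0 < y → 0 < τ →
    deriv (fun s => u x y s) τ
      - (1 / 2) * σ₁ ^ 2 * x ^ 2 * deriv (fun a => deriv (fun b => u b y τ) a) x
      - (1 / 2) * σ₂ ^ 2 * y ^ 2 * deriv (fun a => deriv (fun b => u x b τ) a) y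
      - ρ * σ₁ * σ₂ * x * y * deriv (fun a => deriv (fun b => u a b τ) y) x
      - r * x * deriv (fun a => u a y τ) x
      - r * y * deriv (fun b => u x b τ) y
      + r * u x y τ = 0

theorem solvesTransformedBlackScholes_of_heat_identities {B Ba Bb Bab : ℝ → ℝ → ℝ}
    {σ₁ σ₂ ρ r c S₁ S₂ : ℝ} (hσ₁ : σ₁ ≠ 0) (hσ₂ : σ₂ ≠ 0) (hS₁ : S₁ ≠ 0) (hS₂ : S₂ ≠ 0)
    (hB : ∀ a b, HasFDerivAt (Function.uncurry B)
      ((ContinuousLinearMap.toSpanSingleton ℝ (Ba a b)).coprod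
        (ContinuousLinearMap.toSpanSingleton ℝ (Bb a b))) (a, b))
    (hBa : ∀ a b, HasDerivAt (Ba · b) (-a * Ba a b - ρ * Bab a b) a)
    (hBb : ∀ a b, HasDerivAt (Bb a ·) (-b * Bb a b - ρ * Bab a b) b)
    (hBab : ∀ a b, HasDerivAt (Bb · b) (Bab a b) a) :
    SolvesTransformedBlackScholes σ₁ σ₂ ρ r fun x y τ =>
      c * exp (-r * τ) * B (blackScholesD S₁ σ₁ r x τ) (blackScholesD S₂ σ₂ r y τ) := by
  intro x y τ hx hy hτ
  set dx := blackScholesD S₁ σ₁ r x τ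
  set dy := blackScholesD S₂ σ₂ r y τ
  have hexp : HasDerivAt (fun t => c * exp (-r * t)) (c * (exp (-r * τ) * (-r * 1))) τ :=
    ((hasDerivAt_id τ).const_mul (-r)).exp.const_mul c
  have h_τ : HasDerivAt (fun t => c * exp (-r * t) *
      B (blackScholesD S₁ σ₁ r x t) (blackScholesD S₂ σ₂ r y t)) _ τ :=
    hexp.mul ((hB dx dy).hasDerivAt_uncurry_comp
      (hasDerivAt_blackScholesD_time hσ₁ x hτ) (hasDerivAt_blackScholesD_time hσ₂ y hτ))
  have h_x : HasDerivAt (fun a => c * exp (-r * τ) * B (blackScholesD S₁ σ₁ r a τ) dy) _ x :=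
    ((hB dx dy).hasDerivAt_uncurry_fst.comp x
      (hasDerivAt_blackScholesD_spot hS₁ τ hx.ne')).const_mul _
  have h_y : HasDerivAt (fun b => c * exp (-r * τ) * B dx (blackScholesD S₂ σ₂ r b τ)) _ y :=
    ((hB dx dy).hasDerivAt_uncurry_snd.comp y
      (hasDerivAt_blackScholesD_spot hS₂ τ hy.ne')).const_mul _
  have h_xx := deriv_deriv_comp_blackScholesD_spot (σ := σ₁) (r := r) hS₁ τ
    (F := fun a => c * exp (-r * τ) * B a dy) (F' := fun a => c * exp (-r * τ) * Ba a dy)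
    (fun a => (hB a dy).hasDerivAt_uncurry_fst.const_mul _)
    (fun a => (hBa a dy).const_mul _) hx
  have h_yy := deriv_deriv_comp_blackScholesD_spot (σ := σ₂) (r := r) hS₂ τ
    (F := fun b => c * exp (-r * τ) * B dx b) (F' := fun b => c * exp (-r * τ) * Bb dx b)
    (fun b => (hB dx b).hasDerivAt_uncurry_snd.const_mul _)
    (fun b => (hBb dx b).const_mul _) hy
  have h_xy := deriv_deriv_comp_blackScholesD_mixed (σ₁ := σ₁) (σ₂ := σ₂) (r := r) hS₁ hS₂ τ
    (G := fun a b => c * exp (-r * τ) * B a b) (Gy := fun a b => c * exp (-r * τ) * Bb a b)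
    (fun a b => (hB a b).hasDerivAt_uncurry_snd.const_mul _)
    (fun a b => (hBab a b).const_mul _) hx.ne' hy.ne'
  rw [h_τ.deriv, h_x.deriv, h_y.deriv, h_xx, h_yy, h_xy]
  have hs : 0 < √τ := sqrt_pos.2 hτ
  generalize hq : √τ = q at hs ⊢
  obtain rfl : τ = q ^ 2 := by rw [← hq, sq_sqrt hτ.le]
  simp only [smul_eq_mul]
  field_simp
  ring

end

/-- The closed-form two-asset cash-or-nothing option price satisfies the
transformed two-asset Black-Scholes equation. -/
theorem cash_or_nothing_solves_transformed_blackScholes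
    (σ₁ σ₂ r c S₁ S₂ ρ : ℝ)
    (hσ₁ : 0 < σ₁) (hσ₂ : 0 < σ₂) (hS₁ : 0 < S₁) (hS₂ : 0 < S₂)
    (hρ₁ : -1 < ρ) (hρ₂ : ρ < 1)
    (B : ℝ → ℝ → ℝ)
    (hB : ∀ dx dy : ℝ, B dx dy =
      (1 / (2 * Real.pi * Real.sqrt (1 - ρ ^ 2))) *
        ∫ ξ₁ in Set.Iio dx, ∫ ξ₂ in Set.Iio dy,
          Real.exp (-(ξ₁ ^ 2 - 2 * ρ * ξ₁ * ξ₂ + ξ₂ ^ 2) / (2 * (1 - ρ ^ 2))))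
    (dX : ℝ → ℝ → ℝ)
    (hdX : ∀ x τ : ℝ, dX x τ =
      (Real.log (x / S₁) + (r - σ₁ ^ 2 / 2) * τ) / (σ₁ * Real.sqrt τ))
    (dY : ℝ → ℝ → ℝ)
    (hdY : ∀ y τ : ℝ, dY y τ =
      (Real.log (y / S₂) + (r - σ₂ ^ 2 / 2) * τ) / (σ₂ * Real.sqrt τ))
    (u : ℝ → ℝ → ℝ → ℝ)
    (hu : ∀ x y τ : ℝ, u x y τ = c * Real.exp (-r * τ) * B (dX x τ) (dY y τ)) :
    ∀ x y τ : ℝ, 0 < x → 0 < y → 0 < τ →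
      deriv (fun s => u x y s) τ
        - (1 / 2) * σ₁ ^ 2 * x ^ 2 * deriv (fun a => deriv (fun b => u b y τ) a) x
        - (1 / 2) * σ₂ ^ 2 * y ^ 2 * deriv (fun a => deriv (fun b => u x b τ) a) y
        - ρ * σ₁ * σ₂ * x * y * deriv (fun a => deriv (fun b => u a b τ) y) x
        - r * x * deriv (fun a => u a y τ) x
        - r * y * deriv (fun b => u x b τ) y
        + r * u x y τ = 0 := by
  have hρ : |ρ| < 1 := abs_lt.2 ⟨hρ₁, hρ₂⟩
  obtain rfl : B = bivarNormalCDF ρ := funext₂ hB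
  obtain rfl : dX = blackScholesD S₁ σ₁ r := funext₂ hdX
  obtain rfl : dY = blackScholesD S₂ σ₂ r := funext₂ hdY
  obtain rfl := funext₃ hu
  exact solvesTransformedBlackScholes_of_heat_identities (Bab := bivarNormalPDF ρ)
    hσ₁.ne' hσ₂.ne' hS₁.ne' hS₂.ne' (hasFDerivAt_bivarNormalCDF hρ)
    (hasDerivAt_bivarNormalPartial_fst hρ)
    (fun a b => bivarNormalPDF_comm ρ a b ▸ hasDerivAt_bivarNormalPartial_fst hρ b a)
    (fun a b => bivarNormalPDF_comm ρ a b ▸ hasDerivAt_bivarNormalPartial_snd hρ b a)
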